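/- Let f ∈ ℂ[X] be a nonzero polynomial. The ℂ-algebra ℂ[X,Y]/(Y² − f(X)) is smooth over ℂ (formally smooth and of finite presentation) if and only if f is squarefree. -/
import Mathlib

open MvPolynomial TensorProduct KaehlerDifferential

noncomputable section Stmt4Aux

private abbrev PP : Type := MvPolynomial (Fin 2) ℂ

private def gg (f : Polynomial ℂ) : PP := (X 1 : PP) ^ 2 - Polynomial.aeval (X 0) f

private lemma gg_ne_zero (f : Polynomial ℂ) : gg f ≠ 0 := by
  intro h
  have h2 := congrArg (MvPolynomial.aeval (R := ℂ) ![(0 : Polynomial ℂ), Polynomial.X]) h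
  simp only [gg, map_sub, map_pow, MvPolynomial.aeval_X, Matrix.cons_val_one, Matrix.head_cons,
    Matrix.cons_val_zero, map_zero, ← Polynomial.aeval_algHom_apply,
    ← Polynomial.coeff_zero_eq_aeval_zero', Polynomial.algebraMap_eq] at h2
  have h3 := congrArg (fun p => Polynomial.coeff p 2) h2
  simp [Polynomial.coeff_X_pow, Polynomial.coeff_C] at h3

private lemma mem_gg (f : Polynomial ℂ) :
    gg f ∈ RingHom.ker (algebraMap PP (PP ⧸ Ideal.span {gg f})) := by
  rw [RingHom.mem_ker, Ideal.Quotient.algebraMap_eq, Ideal.Quotient.eq_zero_iff_mem]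
  exact Ideal.subset_span rfl

private lemma ker_eq (f : Polynomial ℂ) :
    RingHom.ker (algebraMap PP (PP ⧸ Ideal.span {gg f})) = Ideal.span {gg f} := by
  rw [Ideal.Quotient.algebraMap_eq, Ideal.mk_ker]

private lemma deriv_gg (f : Polynomial ℂ) {M : Type} [AddCommGroup M] [Module ℂ M]
    [Module PP M] (D : Derivation ℂ PP M) :
    D (gg f) = (X 1 : PP) • D (X 1) + (X 1 : PP) • D (X 1)
      - (Polynomial.aeval (X 0 : PP) (Polynomial.derivative f)) • D (X 0) := by
  rw [gg, Derivation.map_sub, pow_two, Derivation.leibniz, Derivation.map_aeval]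

private def Dder (f a b : Polynomial ℂ) : Derivation ℂ PP (PP ⧸ Ideal.span {gg f}) :=
  MvPolynomial.mkDerivation ℂ (fun i : Fin 2 =>
    if i = 0 then algebraMap PP (PP ⧸ Ideal.span {gg f}) (- Polynomial.aeval (X 0) b)
    else algebraMap PP (PP ⧸ Ideal.span {gg f})
      (MvPolynomial.C (1/2 : ℂ) * Polynomial.aeval (X 0) a * X 1))

set_option synthInstance.maxHeartbeats 1000000 in
private lemma Dder_gg (f a b : Polynomial ℂ)
    (hab : a * f + b * Polynomial.derivative f = 1) : Dder f a b (gg f) = 1 := by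
  have h1 : Polynomial.aeval (X 0 : PP) a * Polynomial.aeval (X 0 : PP) f
      + Polynomial.aeval (X 0 : PP) b * Polynomial.aeval (X 0 : PP) (Polynomial.derivative f)
      = 1 := by
    rw [← map_mul, ← map_mul, ← map_add, hab, map_one]
  have h2 : (MvPolynomial.C (1/2 : ℂ) : PP) * 2 = 1 := by
    rw [show (2 : PP) = MvPolynomial.C (2 : ℂ) from (map_ofNat MvPolynomial.C 2).symm,
      ← map_mul]
    norm_num
  rw [deriv_gg, Dder, MvPolynomial.mkDerivation_X, MvPolynomial.mkDerivation_X]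
  norm_num
  have hsm : ∀ (p q : PP), p • (Ideal.Quotient.mk (Ideal.span {gg f}) q)
      = Ideal.Quotient.mk (Ideal.span {gg f}) (p * q) := fun p q => by
    rw [← Ideal.Quotient.mk_eq_mk, ← Ideal.Quotient.mk_eq_mk, ← Submodule.Quotient.mk_smul,
      smul_eq_mul]
  simp only [← map_mul]
  rw [hsm, hsm, ← map_add (Ideal.Quotient.mk (Ideal.span {gg f})),
    ← map_add (Ideal.Quotient.mk (Ideal.span {gg f}))]
  rw [show (1 : PP ⧸ Ideal.span {gg f}) = Ideal.Quotient.mk (Ideal.span {gg f}) 1 from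
    (map_one _).symm, Ideal.Quotient.eq]
  refine Ideal.mem_span_singleton'.mpr ⟨Polynomial.aeval (X 0) a, ?_⟩
  rw [gg]
  linear_combination (-(Polynomial.aeval (X 0 : PP) a * (X 1 : PP) ^ 2)) * h2 - h1

set_option synthInstance.maxHeartbeats 1000000 in
private def linmap (f a b : Polynomial ℂ) : Ω[PP⁄ℂ] →ₗ[PP] (PP ⧸ Ideal.span {gg f}) :=
  (Dder f a b).liftKaehlerDifferential

set_option synthInstance.maxHeartbeats 1000000 in
private def Lmap (f a b : Polynomial ℂ) :
    (PP ⧸ Ideal.span {gg f}) ⊗[PP] Ω[PP⁄ℂ] →ₗ[PP] (PP ⧸ Ideal.span {gg f}) :=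
  TensorProduct.lift ((LinearMap.mul PP (PP ⧸ Ideal.span {gg f})).compl₂ (linmap f a b))

set_option synthInstance.maxHeartbeats 1000000 in
private lemma Lmap_tmul (f a b : Polynomial ℂ) (ω : Ω[PP⁄ℂ]) :
    Lmap f a b (1 ⊗ₜ[PP] ω) = linmap f a b ω := by
  simp [Lmap, TensorProduct.lift.tmul]

set_option synthInstance.maxHeartbeats 1000000 in
private def Tmap (f : Polynomial ℂ) : (PP ⧸ Ideal.span {gg f}) →ₗ[PP]
    (RingHom.ker (algebraMap PP (PP ⧸ Ideal.span {gg f}))).Cotangent :=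
  Submodule.liftQ (Ideal.span {gg f})
    (LinearMap.toSpanSingleton PP _
      ((RingHom.ker (algebraMap PP (PP ⧸ Ideal.span {gg f}))).toCotangent ⟨gg f, mem_gg f⟩))
    (by
      intro p hp
      rw [LinearMap.mem_ker, LinearMap.toSpanSingleton_apply, ← map_smul,
        Ideal.toCotangent_eq_zero]
      show p • gg f ∈ _ ^ 2
      rw [pow_two, smul_eq_mul]
      exact Ideal.mul_mem_mul ((ker_eq f).symm ▸ hp) (mem_gg f))

set_option synthInstance.maxHeartbeats 1000000 in
private lemma Tmap_one (f : Polynomial ℂ) :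
    Tmap f 1 = (RingHom.ker (algebraMap PP (PP ⧸ Ideal.span {gg f}))).toCotangent
      ⟨gg f, mem_gg f⟩ := by
  have : (1 : PP ⧸ Ideal.span {gg f}) = Submodule.Quotient.mk 1 := rfl
  rw [Tmap, this, Submodule.liftQ_apply, LinearMap.toSpanSingleton_apply, one_smul]

set_option synthInstance.maxHeartbeats 1000000 in
set_option maxHeartbeats 1000000 in
private lemma fs_of_sf (f : Polynomial ℂ) (hsf : Squarefree f) :
    Algebra.FormallySmooth ℂ (PP ⧸ Ideal.span {gg f}) := by
  have hsurj : Function.Surjective (algebraMap PP (PP ⧸ Ideal.span {gg f})) := by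
    rw [Ideal.Quotient.algebraMap_eq]
    exact Ideal.Quotient.mk_surjective
  rw [Algebra.FormallySmooth.iff_split_injection hsurj]
  obtain ⟨a, b, hab⟩ : IsCoprime f (Polynomial.derivative f) :=
    PerfectField.separable_iff_squarefree.mpr hsf
  refine ⟨Tmap f ∘ₗ Lmap f a b, ?_⟩
  apply LinearMap.ext
  intro x
  obtain ⟨⟨w, hw⟩, rfl⟩ := Ideal.toCotangent_surjective _ x
  obtain ⟨q, rfl⟩ := Ideal.mem_span_singleton'.mp ((ker_eq f) ▸ hw)
  rw [LinearMap.comp_apply, LinearMap.id_apply,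
    KaehlerDifferential.kerCotangentToTensor_toCotangent]
  show (Tmap f) ((Lmap f a b) (1 ⊗ₜ[PP] (KaehlerDifferential.D ℂ PP) (q * gg f))) = _
  rw [Derivation.leibniz, TensorProduct.tmul_add, TensorProduct.tmul_smul,
    TensorProduct.tmul_smul, map_add, map_smul, map_smul, Lmap_tmul, Lmap_tmul, linmap,
    Derivation.liftKaehlerDifferential_comp_D, Derivation.liftKaehlerDifferential_comp_D,
    Dder_gg f a b hab]
  have hg0 : ∀ s : PP ⧸ Ideal.span {gg f}, gg f • s = 0 := by
    intro s
    obtain ⟨p, rfl⟩ := Ideal.Quotient.mk_surjective s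
    rw [← Ideal.Quotient.mk_eq_mk, ← Submodule.Quotient.mk_smul, smul_eq_mul,
      Ideal.Quotient.mk_eq_mk, Ideal.Quotient.eq_zero_iff_mem]
    exact Ideal.mul_mem_right p _ (Ideal.subset_span rfl)
  rw [hg0, add_zero, map_smul, Tmap_one, ← map_smul]
  rfl

private lemma common_root (f : Polynomial ℂ) (hf : f ≠ 0) (hsf : ¬ Squarefree f) :
    ∃ r : ℂ, f.eval r = 0 ∧ (Polynomial.derivative f).eval r = 0 := by
  rw [Squarefree] at hsf
  push_neg at hsf
  obtain ⟨p, hpf, hpu⟩ := hsf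
  have hp0 : p ≠ 0 := by
    rintro rfl
    exact hf (zero_dvd_iff.mp (by simpa using hpf))
  obtain ⟨r, hr⟩ := Complex.exists_root
    (Polynomial.degree_pos_of_ne_zero_of_nonunit hp0 hpu)
  have hd : (Polynomial.X - Polynomial.C r) * (Polynomial.X - Polynomial.C r) ∣ f :=
    dvd_trans (mul_dvd_mul (Polynomial.dvd_iff_isRoot.mpr hr)
      (Polynomial.dvd_iff_isRoot.mpr hr)) hpf
  obtain ⟨k, hk⟩ := hd
  refine ⟨r, ?_, ?_⟩ <;> rw [hk] <;>
    simp [Polynomial.derivative_mul, Polynomial.eval_mul, sub_self]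

set_option synthInstance.maxHeartbeats 1000000 in
set_option maxHeartbeats 1000000 in
private lemma sf_of_fs (f : Polynomial ℂ) (hf : f ≠ 0)
    (h : Algebra.FormallySmooth ℂ (PP ⧸ Ideal.span {gg f})) : Squarefree f := by
  by_contra hsf
  obtain ⟨r, hr, hr'⟩ := common_root f hf hsf
  have hsurj : Function.Surjective (algebraMap PP (PP ⧸ Ideal.span {gg f})) := by
    rw [Ideal.Quotient.algebraMap_eq]
    exact Ideal.Quotient.mk_surjective
  obtain ⟨l, hl⟩ := (Algebra.FormallySmooth.iff_split_injection hsurj).mp h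
  have hgb := LinearMap.congr_fun hl
    ((RingHom.ker (algebraMap PP (PP ⧸ Ideal.span {gg f}))).toCotangent ⟨gg f, mem_gg f⟩)
  rw [LinearMap.comp_apply, LinearMap.id_apply,
    KaehlerDifferential.kerCotangentToTensor_toCotangent] at hgb
  rw [show ((⟨gg f, mem_gg f⟩ : RingHom.ker (algebraMap PP (PP ⧸ Ideal.span {gg f}))) : PP)
    = gg f from rfl] at hgb
  rw [deriv_gg, TensorProduct.tmul_sub, TensorProduct.tmul_add] at hgb
  simp only [TensorProduct.tmul_smul] at hgb
  obtain ⟨y1, hy1⟩ := Ideal.toCotangent_surjective _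
    (l (1 ⊗ₜ[PP] (KaehlerDifferential.D ℂ PP) (X 1)))
  obtain ⟨y0, hy0⟩ := Ideal.toCotangent_surjective _
    (l (1 ⊗ₜ[PP] (KaehlerDifferential.D ℂ PP) (X 0)))
  simp only [map_sub, map_add, map_smul] at hgb
  rw [← hy1, ← hy0, ← map_smul, ← map_smul, ← map_add, ← map_sub,
    Ideal.toCotangent_eq] at hgb
  have hm1 : (y1 : PP) ∈ Ideal.span {gg f} := (SetLike.ext_iff.mp (ker_eq f) _).mp y1.2
  have hm0 : (y0 : PP) ∈ Ideal.span {gg f} := (SetLike.ext_iff.mp (ker_eq f) _).mp y0.2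
  obtain ⟨q1, hq1⟩ := Ideal.mem_span_singleton'.mp hm1
  obtain ⟨q0, hq0⟩ := Ideal.mem_span_singleton'.mp hm0
  have hval : (((X 1 : PP) • y1 + (X 1 : PP) • y1
      - (Polynomial.aeval (X 0 : PP) (Polynomial.derivative f)) • y0 :
        RingHom.ker (algebraMap PP (PP ⧸ Ideal.span {gg f}))) : PP)
      - ((⟨gg f, mem_gg f⟩ : RingHom.ker (algebraMap PP (PP ⧸ Ideal.span {gg f}))) : PP)
      = X 1 * (q1 * gg f) + X 1 * (q1 * gg f)
        - Polynomial.aeval (X 0 : PP) (Polynomial.derivative f) * (q0 * gg f) - gg f := by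
    push_cast [smul_eq_mul, hq1, hq0]
    ring
  rw [hval, ker_eq f, pow_two, Ideal.span_singleton_mul_span_singleton] at hgb
  obtain ⟨c, hc⟩ := Ideal.mem_span_singleton'.mp hgb
  have hkey : gg f * (c * gg f) = gg f *
      (X 1 * q1 + X 1 * q1 - Polynomial.aeval (X 0 : PP) (Polynomial.derivative f) * q0 - 1) := by
    rw [gg] at hc ⊢
    linear_combination hc
  have hcancel := mul_left_cancel₀ (gg_ne_zero f) hkey
  have hev := congrArg (MvPolynomial.aeval (R := ℂ) ![r, 0]) hcancel
  simp only [map_sub, map_add, map_mul, map_one, MvPolynomial.aeval_X, Matrix.cons_val_one,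
    Matrix.head_cons, Matrix.cons_val_zero, ← Polynomial.aeval_algHom_apply,
    Polynomial.coe_aeval_eq_eval, gg, map_pow] at hev
  simp [Polynomial.coe_aeval_eq_eval, hr, hr'] at hev

end Stmt4Aux

/-- For a nonzero polynomial `f ∈ ℂ[X]`, the ℂ-algebra
`ℂ[X,Y]/(Y² − f(X))` is smooth over ℂ if and only if `f` is squarefree. -/
theorem stmt4 (f : Polynomial ℂ) (hf : f ≠ 0) :
    Algebra.Smooth ℂ
      (MvPolynomial (Fin 2) ℂ ⧸
        Ideal.span {(MvPolynomial.X 1 : MvPolynomial (Fin 2) ℂ) ^ 2 -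
          Polynomial.aeval (MvPolynomial.X 0) f}) ↔
    Squarefree f := by
  constructor
  · intro h
    exact sf_of_fs f hf h.formallySmooth
  · intro hsf
    exact { formallySmooth := fs_of_sf f hsf
            finitePresentation := Algebra.FinitePresentation.quotient
              (Submodule.fg_span_singleton _) }
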